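/- arXiv:2509.01056 — 2 statements merged into one kernel-verified Lean document; each statement's English description precedes it below -/
import Mathlib

section
/- Let C be an additive category with cokernels and a progenerator P, and set R = C(P,P)^op, the opposite ring of the endomorphism ring of P. Then the functor C(P,−): C → R-mod, sending an object X to the left R-module C(P,X) (with R acting via composition by endomorphisms of P), is well defined, fully faithful and dense; hence it is an equivalence of categories. -/
/-!
Statement 1. Let `C` be an additive category with cokernels and a progenerator `P`, and set
`R = C(P,P)ᵒᵖ` (realized below as `End (Opposite.op P)`). Then the functor
`C(P,−) : C → R-mod` (realized as `preadditiveCoyonedaObj (Opposite.op P)`), sending an object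
`X` to the left `R`-module `C(P,X)`, is well defined (i.e. takes values in finitely presented
`R`-modules), fully faithful and dense onto the finitely presented `R`-modules; hence it induces
an equivalence of categories `C ≌ R-mod`.
-/

open CategoryTheory CategoryTheory.Limits

universe v u

namespace PaperDefs

variable {C : Type u} [Category.{v} C] [Preadditive C]

/-- `g` is a cokernel of `f`, i.e. the sequence `X → Y → Z → 0` is right-exact. -/
def IsCokernelOf {X Y Z : C} (f : X ⟶ Y) (g : Y ⟶ Z) : Prop :=
  f ≫ g = 0 ∧ ∀ ⦃W : C⦄ (h : Y ⟶ W), f ≫ h = 0 → ∃! u : Z ⟶ W, g ≫ u = h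

/-- The category `C` has cokernels: every morphism admits a cokernel. -/
def HasCokernelsP (C : Type u) [Category.{v} C] [Preadditive C] : Prop :=
  ∀ ⦃X Y : C⦄ (f : X ⟶ Y), ∃ (Z : C) (g : Y ⟶ Z), IsCokernelOf f g

/-- `Q` belongs to `add U`: it is a direct summand of a finite direct sum of objects of `U`. -/
def MemAdd (U : Set C) (Q : C) : Prop :=
  ∃ (k : ℕ) (F : Fin k → C) (_ : ∀ i, F i ∈ U) (s : ∀ i, Q ⟶ F i) (r : ∀ i, F i ⟶ Q),
    (∑ i, s i ≫ r i) = 𝟙 Q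

/-- `P` is projective: `C(P, -)` sends right-exact sequences in `C` to exact sequences
of abelian groups. -/
def PaperProjective (P : C) : Prop :=
  ∀ ⦃X Y Z : C⦄ (f : X ⟶ Y) (g : Y ⟶ Z), IsCokernelOf f g →
    (∀ u : P ⟶ Z, ∃ v : P ⟶ Y, v ≫ g = u) ∧
    (∀ v : P ⟶ Y, v ≫ g = 0 → ∃ w : P ⟶ X, w ≫ f = v)

/-- `P` is a progenerator: a projective object such that every object admits
a right-exact presentation by objects of `add P`. -/
def IsProgenerator (P : C) : Prop :=
  PaperProjective P ∧
    ∀ X : C, ∃ (P₁ P₀ : C) (f : P₁ ⟶ P₀) (g : P₀ ⟶ X),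
      MemAdd {P} P₁ ∧ MemAdd {P} P₀ ∧ IsCokernelOf f g

/-- The category of finitely presented left `R`-modules. -/
def FPModuleCat (R : Type v) [Ring R] :=
  CategoryTheory.ObjectProperty.FullSubcategory (fun M : ModuleCat.{v} R => Module.FinitePresentation R M)

instance (R : Type v) [Ring R] : Category (FPModuleCat R) :=
  CategoryTheory.ObjectProperty.FullSubcategory.category _

instance mulActionLeftOp {X : Cᵒᵖ} {Y : C} : MulAction (End X) (Opposite.unop X ⟶ Y) where
  smul r f := r.unop ≫ f
  one_smul := Category.id_comp
  mul_smul _ _ _ := Category.assoc _ _ _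

instance moduleEndLeftOp {X : Cᵒᵖ} {Y : C} : Module (End X) (Opposite.unop X ⟶ Y) where
  smul_add _ _ _ := Preadditive.comp_add _ _ _ _ _ _
  smul_zero _ := Limits.comp_zero
  add_smul _ _ _ := Preadditive.add_comp _ _ _ _ _ _
  zero_smul _ := Limits.zero_comp

def preadditiveCoyonedaObj (X : Cᵒᵖ) : C ⥤ ModuleCat.{v} (End X) where
  obj Y := ModuleCat.of _ (Opposite.unop X ⟶ Y)
  map f := ModuleCat.ofHom
    { toFun := fun g => g ≫ f
      map_add' := fun _ _ => Preadditive.add_comp _ _ _ _ _ _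
      map_smul' := fun _ _ => Category.assoc _ _ _ }

end PaperDefs

/-!
Since `P` is projective, `C(P, -)` turns a cokernel sequence `P₁ ⟶ P₀ ⟶ X ⟶ 0` into a right exact
sequence of `R`-modules. For `Q` in `add P`, a retraction `Q ⟶ Pᵏ ⟶ Q` makes `C(P, Q)` a retract of
`Rᵏ`, hence finitely generated projective, and every linear map out of `C(P, Q)` is composition with
a morphism. Presenting an arbitrary `X` by objects of `add P` then shows that `C(P, X)` is finitely
presented and, since morphisms out of `X` are exactly the morphisms out of `P₀` killing `P₁`, that
`C(P, -)` is fully faithful. Conversely, by fullness a presentation `Rᵐ → Rⁿ → M → 0` lifts to a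
morphism `Pᵐ ⟶ Pⁿ`, whose cokernel `X` has `C(P, X) ≅ M` by right exactness.
-/

open Opposite

namespace PaperDefs

variable {C : Type u} [Category.{v} C] [Preadditive C]

lemma IsCokernelOf.hom_ext {X Y Z W : C} {f : X ⟶ Y} {g : Y ⟶ Z} (hc : IsCokernelOf f g)
    {a b : Z ⟶ W} (h : g ≫ a = g ≫ b) : a = b := by
  obtain ⟨u, -, hu⟩ := hc.2 (g ≫ a) (by rw [← Category.assoc, hc.1, zero_comp])
  exact (hu a rfl).trans (hu b h.symm).symm

lemma MemAdd.exists_sum_comp_eq_id {P Q : C} (h : MemAdd {P} Q) :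
    ∃ (k : ℕ) (s : Fin k → (Q ⟶ P)) (r : Fin k → (P ⟶ Q)), ∑ i, s i ≫ r i = 𝟙 Q := by
  obtain ⟨k, F, hF, s, r, hsr⟩ := h
  obtain rfl : F = fun _ => P := funext hF
  exact ⟨k, s, r, hsr⟩

-- `moduleEndLeftOp` is stated for `unop X ⟶ Y`, which instance search does not unify with
-- `P ⟶ Y`.
instance moduleHom (P X : C) : Module (End (op P)) (P ⟶ X) := moduleEndLeftOp

variable {P : C}

lemma smul_eq_comp (r : End (op P)) {X : C} (u : P ⟶ X) : r • u = r.unop ≫ u := rfl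

variable (P) in
def postcomp {Y Z : C} (g : Y ⟶ Z) : (P ⟶ Y) →ₗ[End (op P)] (P ⟶ Z) :=
  ((PaperDefs.preadditiveCoyonedaObj (op P)).map g).hom

@[simp]
lemma postcomp_apply {Y Z : C} (g : Y ⟶ Z) (u : P ⟶ Y) : postcomp P g u = u ≫ g := rfl

def toEndFamily {Q : C} {k : ℕ} (s : Fin k → (Q ⟶ P)) :
    (P ⟶ Q) →ₗ[End (op P)] (Fin k → End (op P)) where
  toFun v i := (v ≫ s i).op
  map_add' _ _ := funext fun _ => by simp [Preadditive.add_comp]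
  map_smul' _ _ := funext fun _ => Quiver.Hom.unop_inj (Category.assoc _ _ _)

lemma map_comp_left {X Y : C} (φ : (P ⟶ X) →ₗ[End (op P)] (P ⟶ Y)) (a : P ⟶ P) (u : P ⟶ X) :
    φ (a ≫ u) = a ≫ φ u :=
  φ.map_smul a.op u

section Retract

variable {Q : C} {k : ℕ} {s : Fin k → (Q ⟶ P)} {r : Fin k → (P ⟶ Q)}

lemma linearCombination_toEndFamily (hsr : ∑ i, s i ≫ r i = 𝟙 Q) (v : P ⟶ Q) :
    Fintype.linearCombination (End (op P)) r (toEndFamily s v) = v := by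
  simp [Fintype.linearCombination_apply, toEndFamily, smul_eq_comp, ← Preadditive.comp_sum, hsr]

lemma finitePresentation_of_sum_comp_eq_id (hsr : ∑ i, s i ≫ r i = 𝟙 Q) :
    Module.FinitePresentation (End (op P)) (P ⟶ Q) :=
  have := Module.Projective.of_split (toEndFamily s) (Fintype.linearCombination _ r)
    (LinearMap.ext (linearCombination_toEndFamily hsr))
  have := Module.Finite.of_surjective (Fintype.linearCombination (End (op P)) r)
    fun v => ⟨_, linearCombination_toEndFamily hsr v⟩
  Module.finitePresentation_of_projective _ _

lemma postcomp_injective_of_sum_comp_eq_id (hsr : ∑ i, s i ≫ r i = 𝟙 Q) {Y : C} :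
    Function.Injective (postcomp P : (Q ⟶ Y) → _) := by
  intro f f' h
  calc f = (∑ i, s i ≫ r i) ≫ f := by rw [hsr, Category.id_comp]
    _ = ∑ i, s i ≫ postcomp P f (r i) := by simp [Preadditive.sum_comp]
    _ = ∑ i, s i ≫ postcomp P f' (r i) := by rw [h]
    _ = f' := by
        simp only [postcomp_apply, ← Category.assoc, ← Preadditive.sum_comp, hsr, Category.id_comp]

lemma postcomp_surjective_of_sum_comp_eq_id (hsr : ∑ i, s i ≫ r i = 𝟙 Q) {Y : C} :
    Function.Surjective (postcomp P : (Q ⟶ Y) → _) := by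
  intro φ
  refine ⟨∑ i, s i ≫ φ (r i), LinearMap.ext fun u => ?_⟩
  calc u ≫ ∑ i, s i ≫ φ (r i) = φ (∑ i, (u ≫ s i) ≫ r i) := by
        rw [map_sum, Preadditive.comp_sum]
        exact Finset.sum_congr rfl fun i _ => by rw [map_comp_left, Category.assoc]
    _ = φ u := by simp only [Category.assoc, ← Preadditive.comp_sum, hsr, Category.comp_id]

end Retract

section Presentation

variable {X Y Z : C} {f : X ⟶ Y} {g : Y ⟶ Z}

lemma PaperProjective.postcomp_surjective (hP : PaperProjective P) (hc : IsCokernelOf f g) :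
    Function.Surjective (postcomp P g) :=
  (hP f g hc).1

lemma PaperProjective.exact_postcomp (hP : PaperProjective P) (hc : IsCokernelOf f g) :
    Function.Exact (postcomp P f) (postcomp P g) := fun v =>
  ⟨(hP f g hc).2 v, by rintro ⟨w, rfl⟩; simp [hc.1]⟩

end Presentation

namespace IsProgenerator

lemma postcomp_injective (hP : IsProgenerator P) {X Y : C} :
    Function.Injective (postcomp P : (X ⟶ Y) → _) := by
  intro a b h
  obtain ⟨P₁, P₀, f, g, -, h₀, hc⟩ := hP.2 X
  obtain ⟨k, s, r, hsr⟩ := h₀.exists_sum_comp_eq_id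
  refine hc.hom_ext (postcomp_injective_of_sum_comp_eq_id hsr (LinearMap.ext fun u => ?_))
  simpa using LinearMap.congr_fun h (u ≫ g)

lemma postcomp_surjective (hP : IsProgenerator P) {X Y : C} :
    Function.Surjective (postcomp P : (X ⟶ Y) → _) := by
  intro φ
  obtain ⟨P₁, P₀, f, g, -, h₀, hc⟩ := hP.2 X
  obtain ⟨k, s, r, hsr⟩ := h₀.exists_sum_comp_eq_id
  obtain ⟨a₀, ha₀⟩ := postcomp_surjective_of_sum_comp_eq_id hsr (φ ∘ₗ postcomp P g)
  have hfa₀ : f ≫ a₀ = 0 := hP.postcomp_injective <| LinearMap.ext fun u => by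
    simpa [hc.1] using LinearMap.congr_fun ha₀ (u ≫ f)
  obtain ⟨a, hga, -⟩ := hc.2 a₀ hfa₀
  refine ⟨a, LinearMap.ext fun u => ?_⟩
  obtain ⟨v, rfl⟩ := hP.1.postcomp_surjective hc u
  simpa [hga] using LinearMap.congr_fun ha₀ v

lemma finitePresentation (hP : IsProgenerator P) (X : C) :
    Module.FinitePresentation (End (op P)) (P ⟶ X) := by
  obtain ⟨P₁, P₀, f, g, h₁, h₀, hc⟩ := hP.2 X
  obtain ⟨k, s, r, hsr⟩ := h₀.exists_sum_comp_eq_id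
  obtain ⟨m, s', r', hsr'⟩ := h₁.exists_sum_comp_eq_id
  have := finitePresentation_of_sum_comp_eq_id hsr
  have := finitePresentation_of_sum_comp_eq_id hsr'
  refine Module.finitePresentation_of_surjective _ (hP.1.postcomp_surjective hc) ?_
  rw [(hP.1.exact_postcomp hc).linearMap_ker_eq]
  exact Submodule.fg_range _

end IsProgenerator

section Biproduct

variable [HasFiniteBiproducts C]

variable (P) in
noncomputable def biproductHomEquiv (n : ℕ) :
    (P ⟶ ⨁ fun _ : Fin n => P) ≃ₗ[End (op P)] (Fin n → End (op P)) where
  __ := toEndFamily (biproduct.π _)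
  invFun c := biproduct.lift fun i => (c i).unop
  left_inv u := biproduct.hom_ext _ _ fun i => by simp [toEndFamily]
  right_inv c := funext fun i => Quiver.Hom.unop_inj (by simp [toEndFamily])

lemma IsProgenerator.exists_linearEquiv (hC : HasCokernelsP C) (hP : IsProgenerator P)
    (M : Type v) [AddCommGroup M] [Module (End (op P)) M]
    [Module.FinitePresentation (End (op P)) M] :
    ∃ X : C, Nonempty ((P ⟶ X) ≃ₗ[End (op P)] M) := by
  obtain ⟨n, m, π, a, hπ, ha⟩ := Module.FinitePresentation.exists_fin' (End (op P)) M
  let eₙ := biproductHomEquiv P n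
  let eₘ := biproductHomEquiv P m
  obtain ⟨f, hf⟩ := hP.postcomp_surjective (eₙ.symm.toLinearMap ∘ₗ a ∘ₗ eₘ.toLinearMap)
  obtain ⟨X, g, hc⟩ := hC f
  have hrange : (postcomp P f).range.map eₙ.toLinearMap = a.range := by
    rw [hf, ← LinearMap.range_comp]
    simp [LinearMap.range_comp_of_range_eq_top]
  exact ⟨X, ⟨((hP.1.exact_postcomp hc).linearEquivOfSurjective (hP.1.postcomp_surjective hc)).symm
    ≪≫ₗ Submodule.Quotient.equiv _ _ eₙ hrange ≪≫ₗ ha.linearEquivOfSurjective hπ⟩⟩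

end Biproduct

lemma IsProgenerator.full (hP : IsProgenerator P) :
    (PaperDefs.preadditiveCoyonedaObj (op P)).Full :=
  ⟨fun φ => (hP.postcomp_surjective φ.hom).imp fun _ hf => ModuleCat.hom_ext hf⟩

lemma IsProgenerator.faithful (hP : IsProgenerator P) :
    (PaperDefs.preadditiveCoyonedaObj (op P)).Faithful :=
  ⟨fun h => hP.postcomp_injective (congrArg ModuleCat.Hom.hom h)⟩

end PaperDefs

lemma CategoryTheory.ObjectProperty.nonempty_equivalence_of_full_of_faithful
    {C D : Type*} [Category C] [Category D] (F : C ⥤ D) [F.Full] [F.Faithful]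
    (Q : ObjectProperty D) (hF : ∀ X, Q (F.obj X)) (hQ : ∀ M, Q M → ∃ X, Nonempty (F.obj X ≅ M)) :
    Nonempty (C ≌ Q.FullSubcategory) :=
  have : (Q.lift F hF).EssSurj :=
    ⟨fun M => (hQ M.obj M.property).elim fun X ⟨e⟩ => ⟨X, ⟨Q.isoMk e⟩⟩⟩
  have : (Q.lift F hF).IsEquivalence := {}
  ⟨(Q.lift F hF).asEquivalence⟩

open PaperDefs in
theorem hom_functor_of_progenerator_is_equivalence_onto_fp_modules
    {C : Type u} [Category.{v} C] [Preadditive C] [HasFiniteBiproducts C]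
    (hC : HasCokernelsP C) (P : C) (hP : IsProgenerator P) :
    (∀ X : C,
        Module.FinitePresentation (End (Opposite.op P))
          ((PaperDefs.preadditiveCoyonedaObj (Opposite.op P)).obj X)) ∧
    (PaperDefs.preadditiveCoyonedaObj (Opposite.op P)).Full ∧
    (PaperDefs.preadditiveCoyonedaObj (Opposite.op P)).Faithful ∧
    (∀ M : ModuleCat.{v} (End (Opposite.op P)), Module.FinitePresentation (End (Opposite.op P)) M →
        ∃ X : C, Nonempty ((PaperDefs.preadditiveCoyonedaObj (Opposite.op P)).obj X ≅ M)) ∧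
    Nonempty (C ≌ FPModuleCat (End (Opposite.op P))) := by
  have hdense : ∀ M : ModuleCat.{v} (End (op P)), Module.FinitePresentation (End (op P)) M →
      ∃ X : C, Nonempty ((PaperDefs.preadditiveCoyonedaObj (op P)).obj X ≅ M) :=
    fun M _ => (hP.exists_linearEquiv hC M).imp fun _ ⟨e⟩ => ⟨e.toModuleIso⟩
  have := hP.full
  have := hP.faithful
  exact ⟨hP.finitePresentation, hP.full, hP.faithful, hdense,
    ObjectProperty.nonempty_equivalence_of_full_of_faithful _ _ hP.finitePresentation hdense⟩
end

section
/- Let C be an additive category with an automorphism Σ, and assume C has cokernels and a Σ-progenerator P. Then the orbit ring Γ(P; Σ) is strongly graded if and only if add(P) = add(Σ(P)). -/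
/-!
Statement 3. Let `C` be an additive category with an automorphism `Σ` (modelled by a shift by
`ℤ`, with `Σ = shiftFunctor C 1` and `Σⁿ = shiftFunctor C n`), and assume `C` has cokernels and
a `Σ`-progenerator `P`. Then the orbit ring `Γ(P; Σ) = ⊕ₙ C(P, Σⁿ P)ᵒᵖ` is strongly graded if
and only if `add(P) = add(Σ(P))`.
-/

open CategoryTheory CategoryTheory.Limits

universe v u

namespace OrbitDefs

open PaperDefs

variable {C : Type u} [Category.{v} C] [Preadditive C] [HasShift C ℤ]

/-- The set `{Σⁿ P | n ∈ ℤ}` of powers of the automorphism `Σ` applied to `P`. -/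
def shiftOrbit (P : C) : Set C := Set.range (fun n : ℤ => (shiftFunctor C n).obj P)

/-- `P` is a `Σ`-progenerator: a projective object such that every object admits a
right-exact presentation by objects of `add {Σⁿ P | n ∈ ℤ}`. -/
def IsSigmaProgenerator (P : C) : Prop :=
  PaperProjective P ∧
    ∀ X : C, ∃ (P₁ P₀ : C) (f : P₁ ⟶ P₀) (g : P₀ ⟶ X),
      MemAdd (shiftOrbit P) P₁ ∧ MemAdd (shiftOrbit P) P₀ ∧ IsCokernelOf f g

/-- The multiplication of the orbit ring `Γ(P; Σ) = ⊕ₙ C(P, Σⁿ P)ᵒᵖ`: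
for `f ∈ C(P, Σⁿ P)` and `g ∈ C(P, Σᵐ P)`, the product is `f·g = Σⁿ(g) ∘ f ∈ C(P, Σ^{n+m} P)`. -/
def orbitMul (P : C) (n m : ℤ) (f : P ⟶ (shiftFunctor C n).obj P)
    (g : P ⟶ (shiftFunctor C m).obj P) : P ⟶ (shiftFunctor C (n + m)).obj P :=
  f ≫ (shiftFunctor C n).map g ≫ (shiftFunctorAdd' C m n (n + m) (by omega)).inv.app P

/-- The orbit ring `Γ(P; Σ)` is strongly graded: `Γ_n Γ_m = Γ_{n+m}` for all `n, m ∈ ℤ`,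
expressed componentwise: each component `Γ_{n+m}` is generated, as an additive group, by the
products of elements of `Γ_n` and of `Γ_m`. -/
def OrbitRingStronglyGraded (P : C) : Prop :=
  ∀ n m : ℤ,
    AddSubgroup.closure
      {x : P ⟶ (shiftFunctor C (n + m)).obj P |
        ∃ (f : P ⟶ (shiftFunctor C n).obj P) (g : P ⟶ (shiftFunctor C m).obj P),
          x = orbitMul P n m f g} = ⊤

end OrbitDefs

/-!
By full faithfulness of `Σⁿ`, the products `Γₙ Γₘ` are exactly the morphisms
`P → Σⁿ P → Σⁿ⁺ᵐ P`, so `Γₙ Γₘ` generates `Γₙ₊ₘ` for all `m` iff the identity of `P` is a finite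
sum of maps factoring through `Σⁿ P`, i.e. iff `P ∈ add(Σⁿ P)`. Because `Σ` is an additive
automorphism, `P ∈ add(Σⁿ P)` for all `n ∈ ℤ` is equivalent to the two cases `n = ±1`, i.e. to
`P ∈ add(Σ P)` and `Σ P ∈ add(P)`, which is `add(P) = add(Σ P)`.
-/

namespace PaperDefs

variable {C : Type u} [Category.{v} C] [Preadditive C]

theorem memAdd_singleton_iff {R Q : C} :
    MemAdd {R} Q ↔ ∃ (k : ℕ) (s : Fin k → (Q ⟶ R)) (r : Fin k → (R ⟶ Q)),
      ∑ i, s i ≫ r i = 𝟙 Q := by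
  constructor
  · rintro ⟨k, F, hF, s, r, hsum⟩
    obtain rfl : F = fun _ => R := funext hF
    exact ⟨k, s, r, hsum⟩
  · rintro ⟨k, s, r, hsum⟩
    exact ⟨k, fun _ => R, fun _ => rfl, s, r, hsum⟩

theorem mem_closure_comp_iff {X Y Z : C} (x : X ⟶ Z) :
    x ∈ AddSubgroup.closure {x | ∃ (f : X ⟶ Y) (g : Y ⟶ Z), x = f ≫ g} ↔
      ∃ (k : ℕ) (s : Fin k → (X ⟶ Y)) (r : Fin k → (Y ⟶ Z)), ∑ i, s i ≫ r i = x := by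
  constructor
  · intro hx
    induction hx using AddSubgroup.closure_induction with
    | mem x hx =>
      obtain ⟨f, g, rfl⟩ := hx
      exact ⟨1, fun _ => f, fun _ => g, by simp⟩
    | zero => exact ⟨0, Fin.elim0, Fin.elim0, by simp⟩
    | add x y _ _ hx hy =>
      obtain ⟨k, s, r, rfl⟩ := hx
      obtain ⟨l, s', r', rfl⟩ := hy
      exact ⟨k + l, Fin.append s s', Fin.append r r', by simp [Fin.sum_univ_add]⟩
    | neg x _ hx =>
      obtain ⟨k, s, r, rfl⟩ := hx
      exact ⟨k, fun i => -s i, r, by simp⟩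
  · rintro ⟨k, s, r, rfl⟩
    exact AddSubgroup.sum_mem _ fun i _ => AddSubgroup.subset_closure ⟨s i, r i, rfl⟩

theorem memAdd_singleton_iff_id_mem_closure {X Y : C} :
    MemAdd {Y} X ↔ 𝟙 X ∈ AddSubgroup.closure {x | ∃ (f : X ⟶ Y) (g : Y ⟶ X), x = f ≫ g} := by
  rw [memAdd_singleton_iff, mem_closure_comp_iff]

theorem comp_comp_mem_closure_comp {X X' Y Z Z' : C} (u : X' ⟶ X) (w : Z ⟶ Z') {a : X ⟶ Z}
    (ha : a ∈ AddSubgroup.closure {x | ∃ (f : X ⟶ Y) (g : Y ⟶ Z), x = f ≫ g}) :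
    u ≫ a ≫ w ∈ AddSubgroup.closure {x | ∃ (f : X' ⟶ Y) (g : Y ⟶ Z'), x = f ≫ g} := by
  induction ha using AddSubgroup.closure_induction with
  | mem x hx =>
    obtain ⟨f, g, rfl⟩ := hx
    exact AddSubgroup.subset_closure ⟨u ≫ f, g ≫ w, by simp⟩
  | zero => simp
  | add x y _ _ hx hy => simpa using add_mem hx hy
  | neg x _ hx => simpa using neg_mem hx

theorem closure_comp_eq_top_of_memAdd {X Y : C} (h : MemAdd {Y} X) (Z : C) :
    AddSubgroup.closure {x : X ⟶ Z | ∃ (f : X ⟶ Y) (g : Y ⟶ Z), x = f ≫ g} = ⊤ := by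
  obtain ⟨k, s, r, hsr⟩ := memAdd_singleton_iff.mp h
  rw [AddSubgroup.eq_top_iff']
  intro x
  rw [mem_closure_comp_iff]
  refine ⟨k, s, fun i => r i ≫ x, ?_⟩
  simp only [← Category.assoc, ← Preadditive.sum_comp, hsr, Category.id_comp]

theorem memAdd_of_closure_comp_eq_top {X Y Z : C} (e : Z ≅ X)
    (h : AddSubgroup.closure {x : X ⟶ Z | ∃ (f : X ⟶ Y) (g : Y ⟶ Z), x = f ≫ g} = ⊤) :
    MemAdd {Y} X := by
  have := comp_comp_mem_closure_comp (𝟙 X) e.hom (h ▸ AddSubgroup.mem_top e.inv)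
  rwa [Category.id_comp, e.inv_hom_id, ← memAdd_singleton_iff_id_mem_closure] at this

theorem memAdd_of_iso {Q R : C} (e : Q ≅ R) : MemAdd {R} Q :=
  memAdd_singleton_iff.mpr ⟨1, fun _ => e.hom, fun _ => e.inv, by simp⟩

theorem memAdd_self (Q : C) : MemAdd {Q} Q :=
  memAdd_of_iso (Iso.refl Q)

theorem MemAdd.trans {Q R S : C} (hQ : MemAdd {R} Q) (hR : MemAdd {S} R) : MemAdd {S} Q := by
  obtain ⟨k, s, r, hsr⟩ := memAdd_singleton_iff.mp hQ
  rw [memAdd_singleton_iff_id_mem_closure, ← hsr]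
  refine AddSubgroup.sum_mem _ fun i _ => ?_
  simpa using comp_comp_mem_closure_comp (s i) (r i) (memAdd_singleton_iff_id_mem_closure.mp hR)

theorem MemAdd.map {D : Type*} [Category D] [Preadditive D] {Q R : C} (h : MemAdd {R} Q)
    (F : C ⥤ D) [F.Additive] : MemAdd {F.obj R} (F.obj Q) := by
  obtain ⟨k, s, r, hsr⟩ := memAdd_singleton_iff.mp h
  refine memAdd_singleton_iff.mpr ⟨k, fun i => F.map (s i), fun i => F.map (r i), ?_⟩
  simp only [← F.map_comp, ← F.map_sum, hsr, F.map_id]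

theorem setOf_memAdd_eq_iff {P R : C} :
    {Q | MemAdd {P} Q} = {Q | MemAdd {R} Q} ↔ MemAdd {R} P ∧ MemAdd {P} R := by
  constructor
  · intro h
    exact ⟨(Set.ext_iff.mp h P).mp (memAdd_self P), (Set.ext_iff.mp h R).mpr (memAdd_self R)⟩
  · rintro ⟨hP, hR⟩
    ext Q
    exact ⟨fun hQ => hQ.trans hP, fun hQ => hQ.trans hR⟩

end PaperDefs

namespace OrbitDefs

open PaperDefs

variable {C : Type u} [Category.{v} C] [HasShift C ℤ]

theorem setOf_eq_orbitMul_eq (P : C) (n m : ℤ) :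
    {x : P ⟶ (shiftFunctor C (n + m)).obj P |
        ∃ (f : P ⟶ (shiftFunctor C n).obj P) (g : P ⟶ (shiftFunctor C m).obj P),
          x = orbitMul P n m f g} =
      {x | ∃ (f : P ⟶ (shiftFunctor C n).obj P)
        (h : (shiftFunctor C n).obj P ⟶ (shiftFunctor C (n + m)).obj P), x = f ≫ h} := by
  ext x
  constructor
  · rintro ⟨f, g, rfl⟩
    exact ⟨f, _, rfl⟩
  -- `Σⁿ` is fully faithful, so every `h : Σⁿ P ⟶ Σⁿ⁺ᵐ P` is `Σⁿ g` up to the canonical iso.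
  · rintro ⟨f, h, rfl⟩
    refine ⟨f, (shiftFunctor C n).preimage
      (h ≫ (shiftFunctorAdd' C m n (n + m) (by omega)).hom.app P), ?_⟩
    simp [orbitMul]

variable [Preadditive C]

theorem orbitRingStronglyGraded_iff (P : C) :
    OrbitRingStronglyGraded P ↔ ∀ n : ℤ, MemAdd {(shiftFunctor C n).obj P} P := by
  simp only [OrbitRingStronglyGraded, setOf_eq_orbitMul_eq]
  constructor
  · intro h n
    exact memAdd_of_closure_comp_eq_top ((shiftFunctorZero' C (n + -n) (by omega)).app P) (h n (-n))
  · intro h n m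
    exact closure_comp_eq_top_of_memAdd (h n) _

variable [HasFiniteBiproducts C]

instance shiftFunctor_additive (n : ℤ) : (shiftFunctor C n).Additive :=
  have := hasBinaryBiproducts_of_finite_biproducts C
  have := preservesBinaryBiproducts_of_preservesBinaryProducts (shiftFunctor C n)
  Functor.additive_of_preservesBinaryBiproducts _

theorem forall_memAdd_shift_iff (P : C) :
    (∀ n : ℤ, MemAdd {(shiftFunctor C n).obj P} P) ↔
      MemAdd {(shiftFunctor C (1 : ℤ)).obj P} P ∧ MemAdd {P} ((shiftFunctor C (1 : ℤ)).obj P) := by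
  constructor
  · intro h
    refine ⟨h 1, ((h (-1)).map (shiftFunctor C (1 : ℤ))).trans (memAdd_of_iso ?_)⟩
    exact (shiftFunctorCompIsoId C (-1 : ℤ) 1 (by omega)).app P
  · rintro ⟨hPS, hSP⟩ n
    induction n using Int.induction_on with
    | zero => exact memAdd_of_iso ((shiftFunctorZero C ℤ).app P).symm
    | succ k ih =>
      refine ih.trans ((hPS.map (shiftFunctor C (k : ℤ))).trans (memAdd_of_iso ?_))
      exact (shiftFunctorAdd' C 1 (k : ℤ) (k + 1) (by omega)).symm.app P
    | pred k ih =>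
      refine ih.trans ((memAdd_of_iso ?_).trans (hSP.map (shiftFunctor C (-(k : ℤ) - 1))))
      exact (shiftFunctorAdd' C 1 (-(k : ℤ) - 1) (-k) (by omega)).app P

end OrbitDefs

open PaperDefs OrbitDefs in
theorem orbit_ring_strongly_graded_iff_add_eq_general
    {C : Type u} [Category.{v} C] [Preadditive C] [HasFiniteBiproducts C] [HasShift C ℤ]
    (P : C) :
    OrbitRingStronglyGraded P ↔
      {Q : C | MemAdd {P} Q} = {Q : C | MemAdd {(shiftFunctor C (1 : ℤ)).obj P} Q} := by
  rw [orbitRingStronglyGraded_iff, forall_memAdd_shift_iff, setOf_memAdd_eq_iff]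

open PaperDefs OrbitDefs in
theorem orbit_ring_strongly_graded_iff_add_eq
    {C : Type u} [Category.{v} C] [Preadditive C] [HasFiniteBiproducts C] [HasShift C ℤ]
    (hC : HasCokernelsP C) (P : C) (hP : IsSigmaProgenerator P) :
    OrbitRingStronglyGraded P ↔
      {Q : C | MemAdd {P} Q} = {Q : C | MemAdd {(shiftFunctor C (1 : ℤ)).obj P} Q} :=
  orbit_ring_strongly_graded_iff_add_eq_general P
end
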